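/- (Ideal observability of the imperfect augmented system with invariant EKF; containment part of Theorem 5.) Fix g, p_F ∈ ℝ³ and R_G ∈ SO(3). Let T ∈ ℕ, δ₁, …, δ_T ∈ ℝ, and for each t ∈ {0, …, T} let R_{I,t}, R_{KF} ∈ ℝ^{3×3}, v_t, p_{I,t}, p_{f,t}, p_{G,t} ∈ ℝ³ and J_t, J'_t, J*_t ∈ ℝ^{2×3} be arbitrary (the true state at step t). Define A*_t as the 33×33 imperfect-system propagation matrix with the step-t values, Φ*_{t|0} = exp(δ_t A*_t) ⋯ exp(δ₁ A*₁) (with Φ*_{0|0} = I), the extended local Jacobian H_{L,t} = −J_t R_{I,t}ᵀ [0₃ 0₃ I₃ −I₃ 0₃ 0₃ 0₃ 0₃ 0₃ 0₃ 0₃], the current-frame map Jacobian H^C_t = −J'_t R_{I,t}ᵀ [−(R_G p_F)_× 0₃ I₃ 0₃ −I₃ (R_G p_F)_× 0₃ 0₃ 0₃ 0₃ −R_G], and the keyframe Jacobian H^{KF}_t = −J*_t R_{KF}ᵀ [0₃ 0₃ 0₃ 0₃ 0₃ 0₃ 0₃ 0₃ −(p_F)_× I₃ −I₃]. Then for every t: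 H_{L,t} Φ*_{t|0} N*₁ = 0, H^C_t Φ*_{t|0} N*₁ = 0, and H^{KF}_t Φ*_{t|0} N*₁ = 0; i.e., the columns of N*₁ lie in the right null space of the ideally evaluated observability matrix of the imperfect augmented system. -/

import Mathlib

open Matrix

abbrev V3 := Fin 3 → ℝ
abbrev M3 := Matrix (Fin 3) (Fin 3) ℝ

/-- The cross-product (skew-symmetric) matrix `(a)_×`. -/
def skew (a : V3) : M3 :=
  !![0, -a 2, a 1; a 2, 0, -a 0; -a 1, a 0, 0]

/-- Row/column index of the 33-dimensional right-invariant error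
`(ξ_θ, ξ_v, ξ_p, ξ_pf, ξ_pG, ξ_θG, ξ_bg, ξ_ba, ξ_θKF, ξ_pKF, ξ_F)`: 11 blocks of 3. -/
abbrev Idx33 := Fin 11 × Fin 3

/-- Column index for the 33×10 unobservable-direction matrix:
one single column followed by three 3-column blocks. -/
abbrev Cols10 := Fin 1 ⊕ Fin 3 × Fin 3

/-- 33×33 matrix from an 11×11 table of 3×3 blocks. -/
def bm11 (f : Fin 11 → Fin 11 → M3) : Matrix Idx33 Idx33 ℝ :=
  Matrix.of fun p q => f p.1 q.1 p.2 q.2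

/-- The 33×33 propagation matrix `A*` of the imperfect augmented system:
the upper-left 24×24 block is the perfect-system propagation matrix,
all other entries are zero. -/
def AStar (g : V3) (RI : M3) (v pI pf pG : V3) : Matrix Idx33 Idx33 ℝ :=
  bm11 ![![0, 0, 0, 0, 0, 0, -RI, 0, 0, 0, 0],
         ![skew g, 0, 0, 0, 0, 0, -(skew v * RI), -RI, 0, 0, 0],
         ![0, 1, 0, 0, 0, 0, -(skew pI * RI), 0, 0, 0, 0],
         ![0, 0, 0, 0, 0, 0, -(skew pf * RI), 0, 0, 0, 0],
         ![0, 0, 0, 0, 0, 0, -(skew pG * RI), 0, 0, 0, 0],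
         ![0, 0, 0, 0, 0, 0, 0, 0, 0, 0, 0],
         ![0, 0, 0, 0, 0, 0, 0, 0, 0, 0, 0],
         ![0, 0, 0, 0, 0, 0, 0, 0, 0, 0, 0],
         ![0, 0, 0, 0, 0, 0, 0, 0, 0, 0, 0],
         ![0, 0, 0, 0, 0, 0, 0, 0, 0, 0, 0],
         ![0, 0, 0, 0, 0, 0, 0, 0, 0, 0, 0]]

/-- The 33×10 unobservable-direction matrix `N*₁` (parametric in `R_G`; `N*₃` is the
same matrix evaluated at the first-estimate `R̂_{G0}`). -/
def NStar1 (g pF : V3) (RG : M3) : Matrix Idx33 Cols10 ℝ :=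
  Matrix.of fun p j =>
    Sum.elim
      (fun _ => (![g, 0, 0, 0, 0, g, 0, 0, 0, 0, 0] : Fin 11 → V3) p.1 p.2)
      (fun q =>
        (![![0, 0, 0], ![0, 0, 0], ![1, 0, 0], ![1, 0, 0], ![1, -RG, 0],
           ![0, 0, 1], ![0, 0, 0], ![0, 0, 0], ![0, 0, -RGᵀ], ![0, 1, 0],
           ![0, 1, skew pF * RGᵀ]] : Fin 11 → Fin 3 → M3) p.1 q.1 p.2 q.2) j

/-- A 2×33 measurement Jacobian `B ⬝ [f₀ ⋯ f₁₀]` from a 2×3 factor `B`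
and an 11-tuple of 3×3 blocks. -/
def rowJac (B : Matrix (Fin 2) (Fin 3) ℝ) (f : Fin 11 → M3) : Matrix (Fin 2) Idx33 ℝ :=
  Matrix.of fun r p => (B * f p.1) r p.2

/-- `SO(3)`: real 3×3 matrices with `Rᵀ R = I` and `det R = 1`. -/
def SO3 : Set M3 := {R | Rᵀ * R = 1 ∧ R.det = 1}

/-- The state-transition matrix `Φ*_{t|0} = exp(δ_t A*_t) ⋯ exp(δ₁ A*₁)`, `Φ*_{0|0} = I`. -/
noncomputable def PhiStar (δ : ℕ → ℝ) (As : ℕ → Matrix Idx33 Idx33 ℝ) :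
    ℕ → Matrix Idx33 Idx33 ℝ
  | 0 => 1
  | t + 1 => NormedSpace.exp (δ (t + 1) • As (t + 1)) * PhiStar δ As t

/-!
Every propagation matrix satisfies `A*_t N*₁ = 0`, so each factor `exp (δ_t A*_t)` fixes `N*₁`
and `Φ*_{t|0} N*₁ = N*₁`. Each Jacobian then annihilates `N*₁` by a block computation; the one
cancellation that is not formal, in the current-frame Jacobian, is
`(R_G p_F)_× = R_G (p_F)_× R_Gᵀ`, which holds because `R_G ∈ SO(3)`.
-/

namespace Matrix

open scoped Norms.Operator in
theorem exp_mul_of_mul_eq_zero {𝕂 n m : Type*} [RCLike 𝕂] [Fintype n] [DecidableEq n]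
    [Fintype m] {A : Matrix n n 𝕂} {N : Matrix n m 𝕂} (h : A * N = 0) :
    NormedSpace.exp A * N = N := by
  have hexp := (NormedSpace.exp_series_hasSum_exp' (𝕂 := 𝕂) A).map
    (mulRightLinearMap n 𝕂 N) (continuous_id.matrix_mul continuous_const)
  have hterm : ∀ k ≠ 0, ((k.factorial : 𝕂)⁻¹ • A ^ k) * N = 0 := by
    intro k hk
    obtain ⟨k, rfl⟩ := Nat.exists_eq_succ_of_ne_zero hk
    rw [smul_mul, pow_succ, Matrix.mul_assoc, h, Matrix.mul_zero, smul_zero]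
  have hsingle : HasSum (fun k : ℕ => ((k.factorial : 𝕂)⁻¹ • A ^ k) * N) N := by
    simpa using hasSum_single 0 hterm
  exact hexp.unique hsingle

end Matrix

theorem skew_mulVec_self (a : V3) : skew a *ᵥ a = 0 := by
  ext i
  fin_cases i <;> simp [skew, mulVec, dotProduct, Fin.sum_univ_three] <;> ring

theorem transpose_mul_skew_mulVec_mul (M : M3) (a : V3) :
    Mᵀ * skew (M *ᵥ a) * M = M.det • skew a := by
  ext i j
  fin_cases i <;> fin_cases j <;>
    simp [skew, det_fin_three, mul_apply, mulVec, dotProduct, Fin.sum_univ_three] <;> ring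

theorem skew_mulVec_of_mem_SO3 {R : M3} (hR : R ∈ SO3) (a : V3) :
    skew (R *ᵥ a) = R * skew a * Rᵀ := by
  obtain ⟨horth, hdet⟩ := hR
  have hright : R * Rᵀ = 1 := mul_eq_one_comm.mp horth
  calc skew (R *ᵥ a) = (R * Rᵀ) * skew (R *ᵥ a) * (R * Rᵀ) := by simp [hright]
    _ = R * (Rᵀ * skew (R *ᵥ a) * R) * Rᵀ := by noncomm_ring
    _ = R * skew a * Rᵀ := by rw [transpose_mul_skew_mulVec_mul, hdet, one_smul]

def blockRow (f : Fin 11 → M3) : Matrix (Fin 3) Idx33 ℝ :=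
  of fun a p => f p.1 a p.2

theorem rowJac_eq_mul_blockRow (B : Matrix (Fin 2) (Fin 3) ℝ) (f : Fin 11 → M3) :
    rowJac B f = B * blockRow f := by
  ext r ⟨k, c⟩
  simp only [rowJac, blockRow, of_apply, mul_apply]

theorem bm11_mul_eq_zero {m : Type*} [Fintype m] {f : Fin 11 → Fin 11 → M3}
    {N : Matrix Idx33 m ℝ} (h : ∀ i, blockRow (f i) * N = 0) : bm11 f * N = 0 := by
  ext ⟨i, a⟩ j
  exact congrFun (congrFun (h i) a) j

def nStar1Vec (g : V3) : Fin 11 → V3 := ![g, 0, 0, 0, 0, g, 0, 0, 0, 0, 0]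

def nStar1Blocks (pF : V3) (RG : M3) : Fin 11 → Fin 3 → M3 :=
  ![![0, 0, 0], ![0, 0, 0], ![1, 0, 0], ![1, 0, 0], ![1, -RG, 0],
    ![0, 0, 1], ![0, 0, 0], ![0, 0, 0], ![0, 0, -RGᵀ], ![0, 1, 0],
    ![0, 1, skew pF * RGᵀ]]

theorem blockRow_mul_NStar1_eq_zero {g pF : V3} {RG : M3} {f : Fin 11 → M3}
    (hvec : ∑ k, f k *ᵥ nStar1Vec g k = 0)
    (hblocks : ∀ q, ∑ k, f k * nStar1Blocks pF RG k q = 0) :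
    blockRow f * NStar1 g pF RG = 0 := by
  ext a j
  rw [mul_apply, Fintype.sum_prod_type]
  rcases j with _ | ⟨q, b⟩
  · have hrow := congrFun hvec a
    simp only [Finset.sum_apply, mulVec, dotProduct, Pi.zero_apply] at hrow
    exact hrow
  · have hentry := congrFun (congrFun (hblocks q) a) b
    simp only [Matrix.sum_apply, mul_apply, Matrix.zero_apply] at hentry
    exact hentry

theorem rowJac_mul_NStar1_eq_zero {g pF : V3} {RG : M3} (B : Matrix (Fin 2) (Fin 3) ℝ)
    {f : Fin 11 → M3} (hvec : ∑ k, f k *ᵥ nStar1Vec g k = 0)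
    (hblocks : ∀ q, ∑ k, f k * nStar1Blocks pF RG k q = 0) :
    rowJac B f * NStar1 g pF RG = 0 := by
  rw [rowJac_eq_mul_blockRow, Matrix.mul_assoc, blockRow_mul_NStar1_eq_zero hvec hblocks,
    Matrix.mul_zero]

theorem AStar_mul_NStar1 (g pF : V3) (RG RI : M3) (v pI pf pG : V3) :
    AStar g RI v pI pf pG * NStar1 g pF RG = 0 := by
  refine bm11_mul_eq_zero fun i => blockRow_mul_NStar1_eq_zero ?_ ?_ <;>
    fin_cases i <;>
    simp [Fin.forall_fin_succ, nStar1Vec, nStar1Blocks, Fin.sum_univ_succ, skew_mulVec_self]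

theorem PhiStar_mul_of_forall_mul_eq_zero {m : Type*} [Fintype m] (δ : ℕ → ℝ)
    {As : ℕ → Matrix Idx33 Idx33 ℝ} {N : Matrix Idx33 m ℝ} (h : ∀ s, As s * N = 0) (t : ℕ) :
    PhiStar δ As t * N = N := by
  induction t with
  | zero => exact Matrix.one_mul N
  | succ t ih =>
    rw [PhiStar, Matrix.mul_assoc, ih, exp_mul_of_mul_eq_zero (by rw [smul_mul, h, smul_zero])]

/-- Ideal observability of the imperfect augmented system with the invariant EKF:
the columns of `N*₁` lie in the right null space of the ideally evaluated
observability matrix. -/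
theorem ideal_imperfect_invariant_observability (g pF : V3) (RG : M3)
    (hRG : RG ∈ SO3) (T : ℕ) (δ : ℕ → ℝ) (RI RKF : ℕ → M3)
    (v pI pf pG : ℕ → V3) (J J' Jstar : ℕ → Matrix (Fin 2) (Fin 3) ℝ) :
    ∀ t ≤ T,
      rowJac (-(J t * (RI t)ᵀ)) ![0, 0, 1, -1, 0, 0, 0, 0, 0, 0, 0] *
          PhiStar δ (fun s => AStar g (RI s) (v s) (pI s) (pf s) (pG s)) t *
          NStar1 g pF RG = 0 ∧
      rowJac (-(J' t * (RI t)ᵀ))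
            ![-skew (RG *ᵥ pF), 0, 1, 0, -1, skew (RG *ᵥ pF), 0, 0, 0, 0, -RG] *
          PhiStar δ (fun s => AStar g (RI s) (v s) (pI s) (pf s) (pG s)) t *
          NStar1 g pF RG = 0 ∧
      rowJac (-(Jstar t * (RKF t)ᵀ))
            ![0, 0, 0, 0, 0, 0, 0, 0, -skew pF, 1, -1] *
          PhiStar δ (fun s => AStar g (RI s) (v s) (pI s) (pf s) (pG s)) t *
          NStar1 g pF RG = 0 := by
  intro t _
  have hPhi := PhiStar_mul_of_forall_mul_eq_zero δ
    (fun s => AStar_mul_NStar1 g pF RG (RI s) (v s) (pI s) (pf s) (pG s)) t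
  have hskew := skew_mulVec_of_mem_SO3 hRG pF
  simp only [Matrix.mul_assoc _ (PhiStar _ _ t), hPhi]
  refine ⟨?_, ?_, ?_⟩ <;> refine rowJac_mul_NStar1_eq_zero _ ?_ ?_ <;>
    simp [Fin.forall_fin_succ, nStar1Vec, nStar1Blocks, Fin.sum_univ_succ, hskew, neg_mulVec,
      Matrix.mul_assoc]
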